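/- Let μ be a Radon measure on ℝ^d. For balls (or cubes) Q ⊂ R ⊂ T with nontrivial intersection, define δ(Q,R) = 1 + ∫_{2R \ 2Q} |x_Q − y|^{−n} dμ(y), where x_Q is the center of Q and 2Q is the concentric dilate. Then max{δ(Q,R), δ(R,T)} ≤ C·δ(Q,T) for a constant C depending only on n and d. -/

import Mathlib

/-! Since `Q ⊆ R` puts the centre `x_Q` within `r_R` of `x_R`, every point `y ∉ 2R` satisfies
`|x_Q − y| ≤ |x_Q − x_R| + |x_R − y| ≤ (3/2) |x_R − y|`, so the kernel centred at `x_R` is at most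
`(3/2)^n` times the one centred at `x_Q` on `2T \ 2R ⊆ 2T \ 2Q`; this bounds `δ(R,T)`.
The bound on `δ(Q,R)` is just monotonicity of the domain of integration, `2R ⊆ 2T`. -/

open MeasureTheory Metric
open scoped ENNReal

/-- The quantity `δ(Q,R) = 1 + ∫_{2R \ 2Q} |x_Q − y|^{−n} dμ(y)` for balls
`Q = B(xQ, rQ)` and `R = B(xR, rR)`. -/
noncomputable def ballDelta {d : ℕ} (μ : Measure (EuclideanSpace ℝ (Fin d))) (n : ℝ)
    (xQ : EuclideanSpace ℝ (Fin d)) (rQ : ℝ)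
    (xR : EuclideanSpace ℝ (Fin d)) (rR : ℝ) : ℝ≥0∞ :=
  1 + ∫⁻ y in closedBall xR (2 * rR) \ closedBall xQ (2 * rQ),
        ENNReal.ofReal (1 / dist xQ y ^ n) ∂μ

section NormedSpace

variable {E : Type*} [NormedAddCommGroup E] [NormedSpace ℝ E] {x y : E} {r s : ℝ}

theorem dist_add_le_of_closedBall_subset [Nontrivial E] (hr : 0 ≤ r)
    (h : closedBall x r ⊆ closedBall y s) : dist x y + r ≤ s := by
  -- test the inclusion at the point of `closedBall x r` farthest from `y`
  obtain ⟨v, hv, hxy⟩ : ∃ v : E, ‖v‖ = 1 ∧ x - y = ‖x - y‖ • v := by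
    rcases eq_or_ne x y with rfl | hne
    · obtain ⟨v, hv⟩ := exists_norm_eq E zero_le_one
      exact ⟨v, hv, by simp⟩
    · have hne' : x - y ≠ 0 := sub_ne_zero.2 hne
      refine ⟨‖x - y‖⁻¹ • (x - y), norm_smul_inv_norm hne', ?_⟩
      rw [smul_smul, mul_inv_cancel₀ (norm_ne_zero_iff.2 hne'), one_smul]
  have hz : x + r • v ∈ closedBall y s :=
    h (by simp [dist_eq_norm, norm_smul, hv, abs_of_nonneg hr])
  rwa [mem_closedBall, dist_eq_norm, add_sub_right_comm, hxy, ← add_smul, norm_smul, hv,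
    mul_one, Real.norm_of_nonneg (by positivity), ← dist_eq_norm] at hz

theorem closedBall_mul_subset_closedBall_mul {c : ℝ} (hc : 1 ≤ c) (hr : 0 ≤ r)
    (h : closedBall x r ⊆ closedBall y s) : closedBall x (c * r) ⊆ closedBall y (c * s) := by
  rcases subsingleton_or_nontrivial E with hE | hE
  · have hs : 0 ≤ s := dist_nonneg.trans (h (mem_closedBall_self hr))
    intro z _
    rw [Subsingleton.elim z y]
    exact mem_closedBall_self (by positivity)
  · apply closedBall_subset_closedBall'
    nlinarith [dist_add_le_of_closedBall_subset hr h, dist_nonneg (x := x) (y := y)]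

end NormedSpace

theorem one_div_dist_rpow_le_of_two_mul_lt {X : Type*} [PseudoMetricSpace X] {x x' y : X}
    {ρ n : ℝ} (hn : 0 ≤ n) (hx : dist x' x ≤ ρ) (hy : 2 * ρ < dist x y) :
    1 / dist x y ^ n ≤ (3 / 2) ^ n * (1 / dist x' y ^ n) := by
  have hxy : 0 < dist x y := by linarith [dist_nonneg.trans hx]
  have hx'y : 0 < dist x' y := by linarith [dist_triangle x x' y, dist_comm x x', dist_nonneg.trans hx]
  have hle : dist x' y ≤ 3 / 2 * dist x y := by linarith [dist_triangle x' x y]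
  rw [mul_one_div, div_le_div_iff₀ (by positivity) (by positivity), one_mul,
    ← Real.mul_rpow (by norm_num) hxy.le]
  exact Real.rpow_le_rpow hx'y.le hle hn

section BallDelta

variable {d : ℕ} {μ : Measure (EuclideanSpace ℝ (Fin d))} {n : ℝ}
  {xQ xR xT : EuclideanSpace ℝ (Fin d)} {rQ rR rT : ℝ}

theorem ballDelta_le_ballDelta_of_subset
    (h : closedBall xR (2 * rR) ⊆ closedBall xT (2 * rT)) :
    ballDelta μ n xQ rQ xR rR ≤ ballDelta μ n xQ rQ xT rT :=
  add_le_add_right (lintegral_mono_set (Set.sdiff_subset_sdiff_left h)) 1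

theorem ballDelta_le_rpow_mul_ballDelta (hn : 0 ≤ n) (hQR : dist xQ xR ≤ rR)
    (h : closedBall xQ (2 * rQ) ⊆ closedBall xR (2 * rR)) :
    ballDelta μ n xR rR xT rT ≤ ENNReal.ofReal ((3 / 2) ^ n) * ballDelta μ n xQ rQ xT rT := by
  set C := ENNReal.ofReal ((3 / 2) ^ n)
  have hC : 1 ≤ C := ENNReal.one_le_ofReal.2 (Real.one_le_rpow (by norm_num) hn)
  have hkernel : ∀ y ∈ closedBall xT (2 * rT) \ closedBall xR (2 * rR),
      ENNReal.ofReal (1 / dist xR y ^ n) ≤ C * ENNReal.ofReal (1 / dist xQ y ^ n) := by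
    rintro y ⟨-, hy⟩
    rw [← ENNReal.ofReal_mul (by positivity)]
    exact ENNReal.ofReal_le_ofReal (one_div_dist_rpow_le_of_two_mul_lt hn hQR
      (by simpa [mem_closedBall, dist_comm] using hy))
  have hmeas : Measurable fun y : EuclideanSpace ℝ (Fin d) ↦
      C * ENNReal.ofReal (1 / dist xQ y ^ n) := by
    fun_prop
  rw [ballDelta, ballDelta, mul_add, mul_one]
  gcongr
  calc ∫⁻ y in closedBall xT (2 * rT) \ closedBall xR (2 * rR),
        ENNReal.ofReal (1 / dist xR y ^ n) ∂μ
      ≤ ∫⁻ y in closedBall xT (2 * rT) \ closedBall xR (2 * rR),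
          C * ENNReal.ofReal (1 / dist xQ y ^ n) ∂μ := setLIntegral_mono hmeas hkernel
    _ = C * ∫⁻ y in closedBall xT (2 * rT) \ closedBall xR (2 * rR),
          ENNReal.ofReal (1 / dist xQ y ^ n) ∂μ := lintegral_const_mul' _ _ ENNReal.ofReal_ne_top
    _ ≤ C * ∫⁻ y in closedBall xT (2 * rT) \ closedBall xQ (2 * rQ),
          ENNReal.ofReal (1 / dist xQ y ^ n) ∂μ :=
      mul_le_mul_right (lintegral_mono_set (Set.sdiff_subset_sdiff_right h)) C

end BallDelta

/-- for a measure of `n`-polynomial growth and nested balls `Q ⊆ R ⊆ T`,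
`max{δ(Q,R), δ(R,T)} ≤ C δ(Q,T)` with `C` depending only on `n` and `d`. -/
theorem delta_max_nested (d : ℕ) (n : ℝ) (hn : 0 < n) :
    ∃ C : ℝ≥0∞, 0 < C ∧ C ≠ ⊤ ∧
      ∀ μ : Measure (EuclideanSpace ℝ (Fin d)),
        (∀ x ∈ {x : EuclideanSpace ℝ (Fin d) | ∀ ρ > 0, 0 < μ (ball x ρ)},
          ∀ r > 0, μ (ball x r) ≤ ENNReal.ofReal (r ^ n)) →
        ∀ (xQ xR xT : EuclideanSpace ℝ (Fin d)) (rQ rR rT : ℝ),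
          0 < rQ →
          closedBall xQ rQ ⊆ closedBall xR rR →
          closedBall xR rR ⊆ closedBall xT rT →
          max (ballDelta μ n xQ rQ xR rR) (ballDelta μ n xR rR xT rT) ≤
            C * ballDelta μ n xQ rQ xT rT := by
  have hC : 1 ≤ ENNReal.ofReal ((3 / 2) ^ n) :=
    ENNReal.one_le_ofReal.2 (Real.one_le_rpow (by norm_num) hn.le)
  refine ⟨ENNReal.ofReal ((3 / 2) ^ n), zero_lt_one.trans_le hC, ENNReal.ofReal_ne_top, ?_⟩
  intro μ _ xQ xR xT rQ rR rT hrQ hQR hRT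
  have hdQR : dist xQ xR ≤ rR := hQR (mem_closedBall_self hrQ.le)
  have h2QR := closedBall_mul_subset_closedBall_mul one_le_two hrQ.le hQR
  have h2RT := closedBall_mul_subset_closedBall_mul one_le_two (dist_nonneg.trans hdQR) hRT
  refine max_le ?_ (ballDelta_le_rpow_mul_ballDelta hn.le hdQR h2QR)
  exact (ballDelta_le_ballDelta_of_subset h2RT).trans (le_mul_of_one_le_left' hC)
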